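/- arXiv:2311.11316 — 2 statements merged into one kernel-verified Lean document; each statement's English description precedes it below -/
import Mathlib

section
/- Let G be a finite group, φ an irreducible complex character of G, n ≥ 1, and k ≥ 1. Define Ind φ : G ≀ S_n → ℂ by (Ind φ)(v,σ) = Σ_{i: σ(i)=i} φ(v(i)), and for a class function f set f^{(k)}(x) = f(x^k). Then (Ind φ)^{(k)} = Σ_{t | k} t · Σ_{c ∈ conj(G)} φ(c^{k/t}) · a_{t,c}, where the outer sum is over positive divisors t of k, conj(G) is the set of conjugacy classes of G, φ(c^{k/t}) is the common value of φ on k/t-th powers of elements of c, and a_{t,c}(v,σ) counts the t-cycles of σ whose cycle product lies in c. -/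
/-- The permutation `σ` acts on tuples `Fin n → G` by `(σ • v) i = v (σ⁻¹ i)`. -/
def permMulAut (G : Type) [Group G] {n : ℕ} (σ : Equiv.Perm (Fin n)) :
    MulAut (Fin n → G) :=
  { Equiv.arrowCongr σ (Equiv.refl G) with
    map_mul' := fun _ _ => rfl }

/-- The action homomorphism defining the wreath product `G ≀ Sₙ`. -/
def wreathAction (G : Type) [Group G] (n : ℕ) :
    Equiv.Perm (Fin n) →* MulAut (Fin n → G) where
  toFun := permMulAut G
  map_one' := by
    ext v i
    rfl
  map_mul' := fun σ τ => by
    ext v i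
    rfl

/-- The wreath product `G ≀ Sₙ = Gⁿ ⋊ Sₙ`. -/
abbrev Wr (G : Type) [Group G] (n : ℕ) :=
  SemidirectProduct (Fin n → G) (Equiv.Perm (Fin n)) (wreathAction G n)

instance (G : Type) [Group G] [Fintype G] (n : ℕ) : Fintype (Wr G n) :=
  Fintype.ofEquiv ((Fin n → G) × Equiv.Perm (Fin n))
    { toFun := fun p => ⟨p.1, p.2⟩
      invFun := fun x => (x.left, x.right)
      left_inv := fun _ => rfl
      right_inv := fun _ => rfl }

/-- The product `v(i_t)⋯v(i_1)` along the `σ`-cycle starting at `i = i_1`. -/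
def cycleProd {G : Type} [Group G] {n : ℕ} (t : ℕ) (v : Fin n → G)
    (σ : Equiv.Perm (Fin n)) (i : Fin n) : G :=
  (((List.range t).reverse).map fun ℓ => v ((σ ^ ℓ) i)).prod

/-- `a_{t,c}(v,σ)`: the number of `t`-cycles of `σ` whose cycle product lies in the
conjugacy class `c` of `G`. -/
noncomputable def aTC {G : Type} [Group G] {n : ℕ} (t : ℕ) (c : ConjClasses G)
    (v : Fin n → G) (σ : Equiv.Perm (Fin n)) : ℕ :=
  Nat.card {i : Fin n // (σ ^ t) i = i ∧ (∀ s, 0 < s → s < t → (σ ^ s) i ≠ i) ∧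
    ConjClasses.mk (cycleProd t v σ i) = c} / t

namespace Stmt9Aux

open Finset

variable {G : Type} [Group G] {n : ℕ}

lemma fix_pow (σ : Equiv.Perm (Fin n)) {i : Fin n} (h : σ i = i) (q : ℕ) :
    (σ ^ q) i = i := by
  induction q with
  | zero => simp
  | succ q ih => rw [pow_succ, Equiv.Perm.mul_apply, h, ih]

lemma fix_mod (σ : Equiv.Perm (Fin n)) {t : ℕ} {i : Fin n} (h : (σ ^ t) i = i) (b : ℕ) :
    (σ ^ b) i = (σ ^ (b % t)) i := by
  conv_lhs => rw [← Nat.mod_add_div b t]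
  rw [pow_add, Equiv.Perm.mul_apply, pow_mul, fix_pow _ h (b / t)]

lemma fix_of_fix_apply (σ : Equiv.Perm (Fin n)) {s m : ℕ} {i : Fin n}
    (h : (σ ^ s) ((σ ^ m) i) = (σ ^ m) i) : (σ ^ s) i = i := by
  apply (σ ^ m).injective
  rw [← Equiv.Perm.mul_apply, pow_mul_comm, Equiv.Perm.mul_apply, h]

lemma fix_apply_pow (σ : Equiv.Perm (Fin n)) {t : ℕ} {i : Fin n}
    (h : (σ ^ t) i = i) (m : ℕ) : (σ ^ t) ((σ ^ m) i) = (σ ^ m) i := by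
  rw [← Equiv.Perm.mul_apply, pow_mul_comm, Equiv.Perm.mul_apply, h]

lemma inv_fix (σ : Equiv.Perm (Fin n)) {t : ℕ} {i : Fin n} (h : (σ ^ t) i = i) :
    (σ⁻¹ ^ t) i = i := by
  rw [inv_pow]
  conv_lhs => rw [← h]
  exact Equiv.symm_apply_apply _ _

def prodF (v : Fin n → G) (σ : Equiv.Perm (Fin n)) : ℕ → Fin n → G
  | 0, _ => 1
  | (k + 1), i => v i * prodF v σ k (σ⁻¹ i)

variable (v : Fin n → G) (σ : Equiv.Perm (Fin n))

@[simp] lemma prodF_zero (i : Fin n) : prodF v σ 0 i = 1 := rfl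

lemma prodF_succ (k : ℕ) (i : Fin n) :
    prodF v σ (k + 1) i = v i * prodF v σ k (σ⁻¹ i) := rfl

@[simp] lemma prodF_one (i : Fin n) : prodF v σ 1 i = v i := by
  rw [prodF_succ, prodF_zero, mul_one]

lemma prodF_add (a b : ℕ) (i : Fin n) :
    prodF v σ (a + b) i = prodF v σ a i * prodF v σ b ((σ⁻¹ ^ a) i) := by
  induction a generalizing i with
  | zero => simp
  | succ a ih =>
    have h1 : a + 1 + b = (a + b) + 1 := by ring
    rw [h1, prodF_succ, ih, prodF_succ, mul_assoc, pow_succ, Equiv.Perm.mul_apply]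

lemma conj_step {t : ℕ} {i : Fin n} (h : (σ ^ t) i = i) :
    v i * prodF v σ t (σ⁻¹ i) = prodF v σ t i * v i := by
  have e1 : prodF v σ (1 + t) i = v i * prodF v σ t (σ⁻¹ i) := by
    rw [prodF_add, prodF_one, pow_one]
  have e2 : prodF v σ (t + 1) i = prodF v σ t i * v i := by
    rw [prodF_add, prodF_one, inv_fix σ h]
  rw [← e1, Nat.add_comm, e2]

lemma prodF_pow {t : ℕ} {i : Fin n} (h : (σ ^ t) i = i) (m : ℕ) :
    prodF v σ (t * m) i = (prodF v σ t i) ^ m := by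
  induction m with
  | zero => simp
  | succ m ih =>
    have h1 : t * (m + 1) = t * m + t := by ring
    have h2 : (σ⁻¹ ^ (t * m)) i = i := by
      rw [pow_mul]; exact fix_pow _ (inv_fix σ h) m
    rw [h1, prodF_add, ih, h2, pow_succ]

lemma cycleProd_zero (i : Fin n) : cycleProd 0 v σ i = 1 := rfl

lemma cycleProd_succ (t : ℕ) (i : Fin n) :
    cycleProd (t + 1) v σ i = v ((σ ^ t) i) * cycleProd t v σ i := by
  unfold cycleProd
  rw [List.range_succ, List.reverse_append]
  simp

lemma cycleProd_eq (t : ℕ) (i : Fin n) :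
    cycleProd (t + 1) v σ i = prodF v σ (t + 1) ((σ ^ t) i) := by
  induction t with
  | zero => simp [cycleProd_succ, cycleProd_zero]
  | succ t ih =>
    have harg : σ⁻¹ ((σ ^ (t + 1)) i) = (σ ^ t) i := by
      rw [pow_succ', Equiv.Perm.mul_apply, Equiv.Perm.inv_def, Equiv.symm_apply_apply]
    rw [cycleProd_succ, ih]
    conv_rhs => rw [prodF_succ, harg]

lemma prodF_conj {t : ℕ} {i : Fin n} (htpos : 0 < t) (h : (σ ^ t) i = i) :
    prodF v σ t i = v i * cycleProd t v σ i * (v i)⁻¹ := by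
  obtain ⟨s, rfl⟩ : ∃ s, t = s + 1 := ⟨t - 1, (Nat.succ_pred_eq_of_pos htpos).symm⟩
  have hs : (σ ^ s) i = σ⁻¹ i := by
    apply σ.injective
    rw [Equiv.Perm.inv_def, Equiv.apply_symm_apply, ← Equiv.Perm.mul_apply, ← pow_succ', h]
  have e := cycleProd_eq v σ s i
  rw [hs] at e
  have e2 := conj_step v σ h
  rw [← e] at e2
  rw [e2, mul_inv_cancel_right]

lemma mk_cycleProd_prodF {t : ℕ} {i : Fin n} (htpos : 0 < t) (h : (σ ^ t) i = i) :
    ConjClasses.mk (cycleProd t v σ i) = ConjClasses.mk (prodF v σ t i) := by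
  rw [prodF_conj v σ htpos h]
  symm
  rw [ConjClasses.mk_eq_mk_iff_isConj, isConj_iff]
  exact ⟨(v i)⁻¹, by group⟩

lemma mk_prodF_apply {t : ℕ} {i : Fin n} (h : (σ ^ t) i = i) :
    ConjClasses.mk (prodF v σ t (σ i)) = ConjClasses.mk (prodF v σ t i) := by
  have h' : (σ ^ t) (σ i) = σ i := by
    have := fix_apply_pow σ h 1
    rwa [pow_one] at this
  have e := conj_step v σ h'
  rw [Equiv.Perm.inv_def, Equiv.symm_apply_apply] at e
  symm
  rw [ConjClasses.mk_eq_mk_iff_isConj, isConj_iff]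
  exact ⟨v (σ i), by rw [e, mul_inv_cancel_right]⟩

lemma mk_prodF_pow {t : ℕ} {i : Fin n} (h : (σ ^ t) i = i) (m : ℕ) :
    ConjClasses.mk (prodF v σ t ((σ ^ m) i)) = ConjClasses.mk (prodF v σ t i) := by
  induction m with
  | zero => simp
  | succ m ih =>
    have h1 : (σ ^ (m + 1)) i = σ ((σ ^ m) i) := by
      rw [pow_succ', Equiv.Perm.mul_apply]
    rw [h1, mk_prodF_apply v σ (fix_apply_pow σ h m), ih]

lemma mk_cycleProd_pow {t : ℕ} {i : Fin n} (htpos : 0 < t) (h : (σ ^ t) i = i) (m : ℕ) :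
    ConjClasses.mk (cycleProd t v σ ((σ ^ m) i)) = ConjClasses.mk (cycleProd t v σ i) := by
  rw [mk_cycleProd_prodF v σ htpos (fix_apply_pow σ h m),
    mk_cycleProd_prodF v σ htpos h, mk_prodF_pow v σ h m]

end Stmt9Aux


namespace Stmt9Aux

open Finset

open scoped Classical

variable {G : Type} [Group G] {n : ℕ} (v : Fin n → G) (σ : Equiv.Perm (Fin n))

noncomputable def Sset (t : ℕ) (c : ConjClasses G) : Finset (Fin n) :=
  univ.filter fun i => (σ ^ t) i = i ∧ (∀ s, 0 < s → s < t → (σ ^ s) i ≠ i) ∧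
    ConjClasses.mk (cycleProd t v σ i) = c

lemma mem_Sset {t : ℕ} {c : ConjClasses G} {i : Fin n} :
    i ∈ Sset v σ t c ↔ (σ ^ t) i = i ∧ (∀ s, 0 < s → s < t → (σ ^ s) i ≠ i) ∧
      ConjClasses.mk (cycleProd t v σ i) = c := by
  simp [Sset]

lemma aTC_eq (t : ℕ) (c : ConjClasses G) :
    aTC t c v σ = (Sset v σ t c).card / t := by
  unfold aTC Sset
  congr 1
  rw [Nat.card_eq_fintype_card]
  convert Fintype.card_subtype _

def orb (t : ℕ) (i : Fin n) : Finset (Fin n) :=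
  (Finset.range t).image fun m => (σ ^ m) i

lemma mem_orb_self {t : ℕ} (htpos : 0 < t) (i : Fin n) : i ∈ orb σ t i :=
  Finset.mem_image.2 ⟨0, Finset.mem_range.2 htpos, by simp⟩

lemma orb_card {t : ℕ} {i : Fin n} (hmin : ∀ s, 0 < s → s < t → (σ ^ s) i ≠ i) :
    (orb σ t i).card = t := by
  rw [orb, Finset.card_image_of_injOn, Finset.card_range]
  have key : ∀ a b : ℕ, a < b → b < t → (σ ^ a) i = (σ ^ b) i → False := by
    intro a b hab hbt he
    apply hmin (b - a) (by omega) (by omega)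
    apply fix_of_fix_apply σ (m := a)
    rw [← Equiv.Perm.mul_apply, ← pow_add, Nat.sub_add_cancel hab.le, ← he]
  intro a ha b hb hab
  simp only [Finset.mem_coe, Finset.mem_range] at ha hb
  rcases lt_trichotomy a b with h | h | h
  · exact absurd (key a b h hb hab) (by simp)
  · exact h
  · exact absurd (key b a h ha hab.symm) (by simp)

lemma orb_subset_of_mem {t : ℕ} {i j : Fin n} (htpos : 0 < t) (h : (σ ^ t) i = i)
    (hj : j ∈ orb σ t i) : orb σ t j ⊆ orb σ t i := by
  obtain ⟨m, hm, rfl⟩ := Finset.mem_image.1 hj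
  intro x hx
  obtain ⟨a, ha, rfl⟩ := Finset.mem_image.1 hx
  refine Finset.mem_image.2 ⟨(a + m) % t, Finset.mem_range.2 (Nat.mod_lt _ htpos), ?_⟩
  rw [← fix_mod σ h, pow_add, Equiv.Perm.mul_apply]

lemma orb_eq {t : ℕ} {i j : Fin n} (htpos : 0 < t) (h : (σ ^ t) i = i)
    (hj : j ∈ orb σ t i) : orb σ t j = orb σ t i := by
  obtain ⟨m, hm, rfl⟩ := Finset.mem_image.1 hj
  apply Finset.Subset.antisymm
  · exact orb_subset_of_mem σ htpos h (Finset.mem_image.2 ⟨m, hm, rfl⟩)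
  · apply orb_subset_of_mem σ htpos (fix_apply_pow σ h m)
    refine Finset.mem_image.2 ⟨(t - m) % t, Finset.mem_range.2 (Nat.mod_lt _ htpos), ?_⟩
    rw [← fix_mod σ (fix_apply_pow σ h m), ← Equiv.Perm.mul_apply, ← pow_add]
    rw [Nat.sub_add_cancel (Finset.mem_range.1 hm).le, h]

lemma mem_Sset_of_mem_orb {t : ℕ} {c : ConjClasses G} {i j : Fin n} (htpos : 0 < t)
    (hi : i ∈ Sset v σ t c) (hj : j ∈ orb σ t i) : j ∈ Sset v σ t c := by
  rw [mem_Sset] at hi ⊢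
  obtain ⟨h1, h2, h3⟩ := hi
  obtain ⟨m, hm, rfl⟩ := Finset.mem_image.1 hj
  refine ⟨fix_apply_pow σ h1 m, ?_, ?_⟩
  · intro s hs hst hfix
    exact h2 s hs hst (fix_of_fix_apply σ hfix)
  · rw [mk_cycleProd_pow v σ htpos h1 m, h3]

lemma card_Sset {t : ℕ} {c : ConjClasses G} (htpos : 0 < t) :
    (Sset v σ t c).card = ((Sset v σ t c).image (orb σ t)).card * t := by
  rw [Finset.card_eq_sum_card_fiberwise
    (fun i hi => Finset.mem_image_of_mem (orb σ t) hi)]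
  rw [Finset.sum_congr rfl (g := fun _ => t), Finset.sum_const, smul_eq_mul]
  intro O hO
  obtain ⟨i0, hi0, rfl⟩ := Finset.mem_image.1 hO
  have hfix : (σ ^ t) i0 = i0 := ((mem_Sset v σ).1 hi0).1
  have hfil : (Sset v σ t c).filter (fun i => orb σ t i = orb σ t i0) = orb σ t i0 := by
    ext j
    rw [Finset.mem_filter]
    constructor
    · rintro ⟨hjS, hje⟩
      rw [← hje]
      exact mem_orb_self σ htpos j
    · intro hj
      exact ⟨mem_Sset_of_mem_orb v σ htpos hi0 hj, orb_eq σ htpos hfix hj⟩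
  rw [hfil]
  exact orb_card σ ((mem_Sset v σ).1 hi0).2.1

lemma t_mul_aTC {t : ℕ} (c : ConjClasses G) (htpos : 0 < t) :
    t * aTC t c v σ = (Sset v σ t c).card := by
  rw [aTC_eq]
  apply Nat.mul_div_cancel'
  exact ⟨((Sset v σ t c).image (orb σ t)).card, by rw [card_Sset v σ htpos, Nat.mul_comm]⟩

end Stmt9Aux

namespace Stmt9Aux

open Finset

open scoped Classical

variable {G : Type} [Group G] {n : ℕ} (v : Fin n → G) (σ : Equiv.Perm (Fin n))

lemma right_pow (m : ℕ) : ((⟨v, σ⟩ : Wr G n) ^ m).right = σ ^ m := by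
  induction m with
  | zero => rfl
  | succ m ih => rw [pow_succ, SemidirectProduct.mul_right, ih, pow_succ]

lemma left_pow (m : ℕ) (i : Fin n) :
    ((⟨v, σ⟩ : Wr G n) ^ m).left i = prodF v σ m i := by
  induction m generalizing i with
  | zero => rfl
  | succ m ih =>
    rw [pow_succ']
    have h1 : ((⟨v, σ⟩ : Wr G n) * (⟨v, σ⟩ : Wr G n) ^ m).left i
        = v i * ((⟨v, σ⟩ : Wr G n) ^ m).left (σ⁻¹ i) := rfl
    rw [h1, ih, prodF_succ]

lemma fix_dvd {t k : ℕ} {i : Fin n} (h : (σ ^ t) i = i) (htk : t ∣ k) :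
    (σ ^ k) i = i := by
  obtain ⟨m, rfl⟩ := htk
  rw [pow_mul]
  exact fix_pow _ h m

lemma char_eq_of_isConj (V : FDRep ℂ G) {a b : G} (h : IsConj a b) :
    V.character a = V.character b := by
  obtain ⟨u, hu⟩ := h
  have hb : (u : G) * a * (↑u : G)⁻¹ = b := by
    rw [hu.eq, mul_inv_cancel_right]
  rw [← hb, FDRep.char_conj]

lemma char_value (V : FDRep ℂ G) {t k : ℕ} {c : ConjClasses G} (rep : ConjClasses G → G)
    (hrep : ∀ c, ConjClasses.mk (rep c) = c) (htk : t ∣ k) (htpos : 0 < t)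
    {i : Fin n} (hi : i ∈ Sset v σ t c) :
    V.character (prodF v σ k i) = V.character (rep c ^ (k / t)) := by
  obtain ⟨h1, h2, h3⟩ := (mem_Sset v σ).1 hi
  have hk' : k = t * (k / t) := (Nat.mul_div_cancel' htk).symm
  conv_lhs => rw [hk', prodF_pow v σ h1]
  rw [prodF_conj v σ htpos h1, conj_pow, FDRep.char_conj]
  apply char_eq_of_isConj
  have hc : IsConj (cycleProd t v σ i) (rep c) := by
    rw [← ConjClasses.mk_eq_mk_iff_isConj, h3, hrep]
  obtain ⟨u, hu⟩ := hc
  exact ⟨u, hu.pow_right _⟩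

lemma collapse [Fintype G] [Fintype (ConjClasses G)] (t : ℕ) (i : Fin n) (x : ℂ) :
    (∑ c : ConjClasses G, if ((σ ^ t) i = i ∧ (∀ s, 0 < s → s < t → (σ ^ s) i ≠ i) ∧
        ConjClasses.mk (cycleProd t v σ i) = c) then x else 0)
      = if ((σ ^ t) i = i ∧ ∀ s, 0 < s → s < t → (σ ^ s) i ≠ i) then x else 0 := by
  by_cases hQ : (σ ^ t) i = i ∧ ∀ s, 0 < s → s < t → (σ ^ s) i ≠ i
  · rw [if_pos hQ, Finset.sum_eq_single (ConjClasses.mk (cycleProd t v σ i))]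
    · rw [if_pos ⟨hQ.1, hQ.2, rfl⟩]
    · intro c _ hc
      rw [if_neg]
      rintro ⟨-, -, h3⟩
      exact hc h3.symm
    · intro h
      exact absurd (Finset.mem_univ _) h
  · rw [if_neg hQ]
    apply Finset.sum_eq_zero
    intro c _
    rw [if_neg]
    rintro ⟨h1, h2, -⟩
    exact hQ ⟨h1, h2⟩

lemma outer {k : ℕ} {i : Fin n} (hk0 : 0 < k) (hik : (σ ^ k) i = i) (x : ℂ) :
    (∑ t ∈ k.divisors,
      if ((σ ^ t) i = i ∧ ∀ s, 0 < s → s < t → (σ ^ s) i ≠ i) then x else 0) = x := by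
  have hex : ∃ s, 0 < s ∧ (σ ^ s) i = i := ⟨k, hk0, hik⟩
  set t0 := Nat.find hex with ht0
  obtain ⟨ht0pos, ht0fix⟩ := Nat.find_spec hex
  have hmin : ∀ s, 0 < s → s < t0 → (σ ^ s) i ≠ i :=
    fun s hs hst hf => Nat.find_min hex hst ⟨hs, hf⟩
  have hdvd : t0 ∣ k := by
    have hmod : (σ ^ (k % t0)) i = i := by rw [← fix_mod σ ht0fix]; exact hik
    rcases Nat.eq_zero_or_pos (k % t0) with h | h
    · exact Nat.dvd_of_mod_eq_zero h
    · exact absurd hmod (hmin _ h (Nat.mod_lt _ ht0pos))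
  have hmem : t0 ∈ k.divisors := Nat.mem_divisors.2 ⟨hdvd, by omega⟩
  rw [Finset.sum_eq_single_of_mem t0 hmem]
  · rw [if_pos ⟨ht0fix, hmin⟩]
  · intro b hb hbne
    rw [if_neg]
    rintro ⟨hb1, hb2⟩
    apply hbne
    have hbpos : 0 < b := Nat.pos_of_mem_divisors hb
    have h1 : t0 ≤ b := Nat.find_min' hex ⟨hbpos, hb1⟩
    rcases eq_or_lt_of_le h1 with h | h
    · omega
    · exact absurd ht0fix (hb2 t0 ht0pos h)

end Stmt9Aux

open scoped Classical

open CategoryTheory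

/-- For an irreducible character `φ` of `G` and `k ≥ 1`,
`(Ind φ)^{(k)} = Σ_{t | k} t · Σ_{c ∈ conj(G)} φ(c^{k/t}) · a_{t,c}` on `G ≀ Sₙ`,
where `(Ind φ)(v,σ) = Σ_{i : σ(i)=i} φ(v(i))` and `f^{(k)}(x) = f(x^k)`.
The representative function `rep` picks an element out of each conjugacy class;
`φ(c^{k/t})` is the (well-defined) value `φ((rep c)^{k/t})`. -/
theorem stmt9 (G : Type) [Group G] [Fintype G] [Fintype (ConjClasses G)]
    (n k : ℕ) (hn : 1 ≤ n) (hk : 1 ≤ k)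
    (V : FDRep ℂ G) [Simple V]
    (rep : ConjClasses G → G) (hrep : ∀ c, ConjClasses.mk (rep c) = c)
    (v : Fin n → G) (σ : Equiv.Perm (Fin n)) :
    (∑ i : Fin n, if ((⟨v, σ⟩ : Wr G n) ^ k).right i = i
        then V.character (((⟨v, σ⟩ : Wr G n) ^ k).left i) else 0)
      = ∑ t ∈ k.divisors, (t : ℂ) *
          ∑ c : ConjClasses G, V.character (rep c ^ (k / t)) * (aTC t c v σ : ℂ) := by
  have hleft : ∀ i : Fin n, (if ((⟨v, σ⟩ : Wr G n) ^ k).right i = i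
      then V.character (((⟨v, σ⟩ : Wr G n) ^ k).left i) else 0)
      = (if (σ ^ k) i = i then V.character (Stmt9Aux.prodF v σ k i) else 0) := by
    intro i
    rw [Stmt9Aux.right_pow v σ k, Stmt9Aux.left_pow v σ k i]
  rw [Finset.sum_congr rfl (fun i _ => hleft i), ← Finset.sum_filter]
  have key : ∀ t ∈ k.divisors,
      (t : ℂ) * ∑ c : ConjClasses G, V.character (rep c ^ (k / t)) * (aTC t c v σ : ℂ)
      = ∑ i ∈ Finset.univ.filter (fun i : Fin n => (σ ^ k) i = i),
          (if ((σ ^ t) i = i ∧ ∀ s, 0 < s → s < t → (σ ^ s) i ≠ i)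
            then V.character (Stmt9Aux.prodF v σ k i) else 0) := by
    intro t ht
    have htpos : 0 < t := Nat.pos_of_mem_divisors ht
    have htk : t ∣ k := (Nat.mem_divisors.1 ht).1
    calc (t : ℂ) * ∑ c : ConjClasses G, V.character (rep c ^ (k / t)) * (aTC t c v σ : ℂ)
        = ∑ c : ConjClasses G, ∑ i ∈ Stmt9Aux.Sset v σ t c,
            V.character (Stmt9Aux.prodF v σ k i) := by
          rw [Finset.mul_sum]
          apply Finset.sum_congr rfl
          intro c _
          rw [Finset.sum_congr rfl
              (fun i hi => Stmt9Aux.char_value v σ V rep hrep htk htpos hi),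
            Finset.sum_const, nsmul_eq_mul, ← Stmt9Aux.t_mul_aTC v σ c htpos]
          push_cast
          ring
      _ = ∑ c : ConjClasses G, ∑ i ∈ Finset.univ.filter (fun i : Fin n => (σ ^ k) i = i),
            (if ((σ ^ t) i = i ∧ (∀ s, 0 < s → s < t → (σ ^ s) i ≠ i) ∧
                ConjClasses.mk (cycleProd t v σ i) = c)
              then V.character (Stmt9Aux.prodF v σ k i) else 0) := by
          apply Finset.sum_congr rfl
          intro c _
          have hset : Stmt9Aux.Sset v σ t c
              = (Finset.univ.filter (fun i : Fin n => (σ ^ k) i = i)).filter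
                  (fun i => (σ ^ t) i = i ∧ (∀ s, 0 < s → s < t → (σ ^ s) i ≠ i) ∧
                    ConjClasses.mk (cycleProd t v σ i) = c) := by
            ext i
            simp only [Stmt9Aux.mem_Sset, Finset.mem_filter, Finset.mem_univ, true_and]
            exact ⟨fun h => ⟨Stmt9Aux.fix_dvd σ h.1 htk, h⟩, fun h => h.2⟩
          rw [hset, Finset.sum_filter]
      _ = ∑ i ∈ Finset.univ.filter (fun i : Fin n => (σ ^ k) i = i),
            ∑ c : ConjClasses G,
            (if ((σ ^ t) i = i ∧ (∀ s, 0 < s → s < t → (σ ^ s) i ≠ i) ∧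
                ConjClasses.mk (cycleProd t v σ i) = c)
              then V.character (Stmt9Aux.prodF v σ k i) else 0) := Finset.sum_comm
      _ = ∑ i ∈ Finset.univ.filter (fun i : Fin n => (σ ^ k) i = i),
            (if ((σ ^ t) i = i ∧ ∀ s, 0 < s → s < t → (σ ^ s) i ≠ i)
              then V.character (Stmt9Aux.prodF v σ k i) else 0) := by
          apply Finset.sum_congr rfl
          intro i _
          exact Stmt9Aux.collapse v σ t i _
  calc (∑ i ∈ Finset.univ.filter (fun i : Fin n => (σ ^ k) i = i),
          V.character (Stmt9Aux.prodF v σ k i))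
      = ∑ i ∈ Finset.univ.filter (fun i : Fin n => (σ ^ k) i = i),
          ∑ t ∈ k.divisors,
          (if ((σ ^ t) i = i ∧ ∀ s, 0 < s → s < t → (σ ^ s) i ≠ i)
            then V.character (Stmt9Aux.prodF v σ k i) else 0) :=
        Finset.sum_congr rfl
          (fun i hi => (Stmt9Aux.outer σ hk (Finset.mem_filter.1 hi).2 _).symm)
    _ = ∑ t ∈ k.divisors,
          ∑ i ∈ Finset.univ.filter (fun i : Fin n => (σ ^ k) i = i),
          (if ((σ ^ t) i = i ∧ ∀ s, 0 < s → s < t → (σ ^ s) i ≠ i)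
            then V.character (Stmt9Aux.prodF v σ k i) else 0) := Finset.sum_comm
    _ = ∑ t ∈ k.divisors, (t : ℂ) *
          ∑ c : ConjClasses G, V.character (rep c ^ (k / t)) * (aTC t c v σ : ℂ) :=
        (Finset.sum_congr rfl key).symm
end

section
/- Let G be a finite group, n ≥ 2, t ≥ 2 with t ≤ n-1, c a conjugacy class of G, and φ an irreducible complex character of G. Let H = G × (G ≀ S_{n-1}) ≤ G ≀ S_n be the subgroup of elements (v, σ) with σ(n) = n, identified so that the G-factor records v(n). Then the restriction of a_{t,c} to H equals the function (g, (v', σ')) ↦ a_{t,c}(v', σ') (it does not depend on g), and consequently ⟨Ind_n φ, a_{t,c}⟩_{G≀S_n} = ⟨φ, 1⟩_G · ⟨a_{t,c}, 1⟩_{G ≀ S_{n-1}}. In particular, if φ is nontrivial then ⟨Ind_n φ, a_{t,c}⟩_{G≀S_n} = 0. -/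
section Aux

open Equiv

lemma decomp_pow_succ {n : ℕ} (σ' : Equiv.Perm (Fin n)) (ℓ : ℕ) (i : Fin n) :
    ((Equiv.Perm.decomposeFin.symm (0, σ')) ^ ℓ) i.succ = ((σ' ^ ℓ) i).succ := by
  induction ℓ with
  | zero => simp
  | succ ℓ ih =>
    rw [pow_succ', pow_succ', Equiv.Perm.mul_apply, Equiv.Perm.mul_apply, ih,
      Equiv.Perm.decomposeFin_symm_apply_succ]
    simp

lemma aTC_cons {G : Type} [Group G] {n : ℕ} (t : ℕ) (ht : 2 ≤ t) (c : ConjClasses G)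
    (g : G) (v' : Fin n → G) (σ' : Equiv.Perm (Fin n)) :
    aTC t c (Fin.cons g v') (Equiv.Perm.decomposeFin.symm (0, σ')) = aTC t c v' σ' := by
  set σ : Equiv.Perm (Fin (n + 1)) := Equiv.Perm.decomposeFin.symm (0, σ') with hσ
  unfold aTC
  congr 1
  apply Nat.card_congr
  apply Equiv.symm
  refine Equiv.ofBijective (fun j => ⟨j.1.succ, ?_, ?_, ?_⟩) ⟨?_, ?_⟩
  · rw [decomp_pow_succ, j.2.1]
  · intro s hs0 hst h
    rw [decomp_pow_succ] at h
    exact j.2.2.1 s hs0 hst (Fin.succ_injective n h)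
  · have : cycleProd t (Fin.cons g v') σ j.1.succ = cycleProd t v' σ' j.1 := by
      unfold cycleProd
      congr 1
      apply List.map_congr_left
      intro ℓ _
      rw [decomp_pow_succ, Fin.cons_succ]
    rw [this]; exact j.2.2.2
  · intro a b hab
    apply Subtype.ext
    exact Fin.succ_injective n (congrArg Subtype.val hab)
  · rintro ⟨i, h1, h2, h3⟩
    have hi0 : i ≠ 0 := by
      intro h
      apply h2 1 one_pos (lt_of_lt_of_le one_lt_two ht)
      rw [h, pow_one]
      exact Equiv.Perm.decomposeFin_symm_apply_zero 0 σ'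
    obtain ⟨j, hj⟩ := Fin.exists_succ_eq.mpr hi0
    refine ⟨⟨j, ?_, ?_, ?_⟩, Subtype.ext hj⟩
    · have := h1; rw [← hj, decomp_pow_succ] at this
      exact Fin.succ_injective n this
    · intro s hs0 hst h
      apply h2 s hs0 hst
      rw [← hj, decomp_pow_succ, h]
    · have : cycleProd t (Fin.cons g v') σ i = cycleProd t v' σ' j := by
        unfold cycleProd
        congr 1
        apply List.map_congr_left
        intro ℓ _
        rw [← hj, decomp_pow_succ, Fin.cons_succ]
      rw [← this]; exact h3

lemma conj_pow_apply {n : ℕ} (σ τ : Equiv.Perm (Fin n)) (ℓ : ℕ) (j : Fin n) :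
    ((τ⁻¹ * σ * τ) ^ ℓ) j = τ⁻¹ ((σ ^ ℓ) (τ j)) := by
  induction ℓ with
  | zero => simp
  | succ ℓ ih =>
    rw [pow_succ', pow_succ', Equiv.Perm.mul_apply, ih]
    simp [Equiv.Perm.mul_apply]

lemma aTC_relabel {G : Type} [Group G] {n : ℕ} (t : ℕ) (c : ConjClasses G)
    (v : Fin n → G) (σ τ : Equiv.Perm (Fin n)) :
    aTC t c (v ∘ ⇑τ) (τ⁻¹ * σ * τ) = aTC t c v σ := by
  unfold aTC
  congr 1
  apply Nat.card_congr
  refine Equiv.subtypeEquiv τ fun j => ?_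
  have hcp : cycleProd t (v ∘ ⇑τ) (τ⁻¹ * σ * τ) j = cycleProd t v σ (τ j) := by
    unfold cycleProd
    congr 1
    apply List.map_congr_left
    intro ℓ _
    show v (τ (((τ⁻¹ * σ * τ) ^ ℓ) j)) = _
    rw [conj_pow_apply]
    simp
  constructor
  · rintro ⟨h1, h2, h3⟩
    refine ⟨?_, ?_, ?_⟩
    · rw [conj_pow_apply] at h1
      have := congrArg τ h1
      simpa using this
    · intro s hs0 hst h
      apply h2 s hs0 hst
      rw [conj_pow_apply, h]
      simp
    · rw [← hcp]; exact h3
  · rintro ⟨h1, h2, h3⟩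
    refine ⟨?_, ?_, ?_⟩
    · rw [conj_pow_apply, h1]; simp
    · intro s hs0 hst h
      apply h2 s hs0 hst
      rw [conj_pow_apply] at h
      have := congrArg τ h
      simpa using this
    · rw [hcp]; exact h3

lemma sum_main {G : Type} [Group G] [Fintype G] (n t : ℕ) (ht : 2 ≤ t)
    (c : ConjClasses G) (φ : G → ℂ) :
    ∑ v : Fin (n + 1) → G, ∑ σ : Equiv.Perm (Fin (n + 1)),
      (∑ i : Fin (n + 1), if σ i = i then φ (v i) else 0) * ((aTC t c v σ : ℕ) : ℂ)
    = (n + 1 : ℂ) * ((∑ g : G, φ g) *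
        ∑ v' : Fin n → G, ∑ σ' : Equiv.Perm (Fin n), ((aTC t c v' σ' : ℕ) : ℂ)) := by
  have step1 : ∀ (v : Fin (n+1) → G) (σ : Equiv.Perm (Fin (n+1))),
      (∑ i : Fin (n + 1), if σ i = i then φ (v i) else 0) * ((aTC t c v σ : ℕ) : ℂ)
      = ∑ i : Fin (n + 1), (if σ i = i then φ (v i) * ((aTC t c v σ : ℕ) : ℂ) else 0) := by
    intro v σ
    rw [Finset.sum_mul]
    exact Finset.sum_congr rfl fun i _ => by split_ifs <;> simp
  simp only [step1]
  have swap1 : (∑ v : Fin (n + 1) → G, ∑ σ : Equiv.Perm (Fin (n + 1)), ∑ i : Fin (n + 1),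
      (if σ i = i then φ (v i) * ((aTC t c v σ : ℕ) : ℂ) else 0))
    = ∑ i : Fin (n + 1), ∑ v : Fin (n + 1) → G, ∑ σ : Equiv.Perm (Fin (n + 1)),
      (if σ i = i then φ (v i) * ((aTC t c v σ : ℕ) : ℂ) else 0) :=
    calc (∑ v : Fin (n + 1) → G, ∑ σ : Equiv.Perm (Fin (n + 1)), ∑ i : Fin (n + 1),
        (if σ i = i then φ (v i) * ((aTC t c v σ : ℕ) : ℂ) else 0))
        = ∑ v : Fin (n + 1) → G, ∑ i : Fin (n + 1), ∑ σ : Equiv.Perm (Fin (n + 1)),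
          (if σ i = i then φ (v i) * ((aTC t c v σ : ℕ) : ℂ) else 0) :=
          Finset.sum_congr rfl fun v _ => Finset.sum_comm
      _ = ∑ i : Fin (n + 1), ∑ v : Fin (n + 1) → G, ∑ σ : Equiv.Perm (Fin (n + 1)),
          (if σ i = i then φ (v i) * ((aTC t c v σ : ℕ) : ℂ) else 0) := Finset.sum_comm
  rw [swap1]
  have base : ∑ v : Fin (n + 1) → G, ∑ σ : Equiv.Perm (Fin (n + 1)),
      (if σ 0 = 0 then φ (v 0) * ((aTC t c v σ : ℕ) : ℂ) else 0)
      = (∑ g : G, φ g) *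
        ∑ v' : Fin n → G, ∑ σ' : Equiv.Perm (Fin n), ((aTC t c v' σ' : ℕ) : ℂ) := by
    rw [← Equiv.sum_comp (Fin.consEquiv fun _ => G)
      (fun v => ∑ σ : Equiv.Perm (Fin (n + 1)),
        (if σ 0 = 0 then φ (v 0) * ((aTC t c v σ : ℕ) : ℂ) else 0))]
    rw [Fintype.sum_prod_type]
    have inner : ∀ (g : G) (v' : Fin n → G),
        (∑ σ : Equiv.Perm (Fin (n + 1)),
          (if σ 0 = 0 then φ ((Fin.consEquiv fun _ => G) (g, v') 0) *
            ((aTC t c ((Fin.consEquiv fun _ => G) (g, v')) σ : ℕ) : ℂ) else 0))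
        = φ g * ∑ σ' : Equiv.Perm (Fin n), ((aTC t c v' σ' : ℕ) : ℂ) := by
      intro g v'
      rw [← Equiv.sum_comp (Equiv.Perm.decomposeFin.symm : _ ≃ Equiv.Perm (Fin (n+1)))]
      rw [Fintype.sum_prod_type_right]
      have : ∀ σ' : Equiv.Perm (Fin n),
          (∑ p : Fin (n + 1),
            (if Equiv.Perm.decomposeFin.symm (p, σ') 0 = 0 then
              φ ((Fin.consEquiv fun _ => G) (g, v') 0) *
              ((aTC t c ((Fin.consEquiv fun _ => G) (g, v'))
                (Equiv.Perm.decomposeFin.symm (p, σ')) : ℕ) : ℂ) else 0))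
          = φ g * ((aTC t c v' σ' : ℕ) : ℂ) := by
        intro σ'
        simp only [Equiv.Perm.decomposeFin_symm_apply_zero]
        rw [Finset.sum_ite_eq' Finset.univ (0 : Fin (n+1))]
        simp only [Finset.mem_univ, if_true]
        have h1 : (Fin.consEquiv fun _ => G) (g, v') 0 = g := rfl
        have h2 : (Fin.consEquiv fun _ => G) (g, v') = Fin.cons g v' := rfl
        rw [h1, h2, aTC_cons t ht]
      simp only [this]
      rw [← Finset.mul_sum]
    simp only [inner]
    rw [Finset.sum_mul]
    exact Finset.sum_congr rfl fun g _ => (Finset.mul_sum _ _ _).symm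
  have key : ∀ i : Fin (n + 1), ∑ v : Fin (n + 1) → G, ∑ σ : Equiv.Perm (Fin (n + 1)),
      (if σ i = i then φ (v i) * ((aTC t c v σ : ℕ) : ℂ) else 0)
      = (∑ g : G, φ g) *
        ∑ v' : Fin n → G, ∑ σ' : Equiv.Perm (Fin n), ((aTC t c v' σ' : ℕ) : ℂ) := by
    intro i
    rw [← base]
    symm
    set τ : Equiv.Perm (Fin (n+1)) := Equiv.swap 0 i with hτ
    have hτ0 : τ 0 = i := Equiv.swap_apply_left 0 i
    have hτsymm : τ.symm = τ := Equiv.symm_swap 0 i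
    refine Fintype.sum_equiv (Equiv.arrowCongr τ (Equiv.refl G)) _ _ fun v => ?_
    refine Fintype.sum_equiv (MulAut.conj τ).toEquiv _ _ fun σ => ?_
    have hev : (Equiv.arrowCongr τ (Equiv.refl G)) v = v ∘ ⇑τ := by
      funext x
      simp [Equiv.arrowCongr_apply, hτsymm]
    have hconj : (MulAut.conj τ).toEquiv σ = τ * σ * τ⁻¹ := rfl
    rw [hev, hconj]
    have hτi : τ⁻¹ i = 0 := by
      rw [show (τ⁻¹ : Equiv.Perm (Fin (n+1))) i = τ.symm i from rfl, hτsymm]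
      exact Equiv.swap_apply_right 0 i
    have hcond : ((τ * σ * τ⁻¹) i = i) ↔ (σ 0 = 0) := by
      rw [show (τ * σ * τ⁻¹) i = τ (σ (τ⁻¹ i)) from rfl, hτi]
      constructor
      · intro h
        exact τ.injective (h.trans hτ0.symm)
      · intro h; rw [h, hτ0]
    have hval : (v ∘ ⇑τ) i = v 0 := by
      show v (τ i) = v 0
      rw [show τ i = 0 from Equiv.swap_apply_right 0 i]
    have hA : aTC t c (v ∘ ⇑τ) (τ * σ * τ⁻¹) = aTC t c v σ := by
      have h := aTC_relabel t c v σ τ⁻¹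
      rw [inv_inv] at h
      have hfun : (v ∘ ⇑τ : Fin (n+1) → G) = v ∘ ⇑τ⁻¹ := by
        rw [show (τ⁻¹ : Equiv.Perm (Fin (n+1))) = τ from by
          rw [hτ]; exact Equiv.swap_inv 0 i]
      rw [hfun]
      exact h
    rw [hA, hval]
    exact (if_congr hcond rfl rfl).symm
  rw [Finset.sum_congr rfl fun i _ => key i, Finset.sum_const, Finset.card_univ,
    Fintype.card_fin, nsmul_eq_mul]
  norm_cast

open CategoryTheory Module in
lemma char_eq_one_of_invariant (G : Type) [Group G] [Fintype G] (V : FDRep ℂ G)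
    [Simple V] (x : V) (hx0 : x ≠ 0) (hinv : ∀ g : G, V.ρ g x = x) :
    ∀ g, V.character g = 1 := by
  let W : FDRep ℂ G := FDRep.of (Representation.trivial ℂ (G := G) (V := ℂ))
  let f : W ⟶ V :=
    { hom := ConcreteCategory.ofHom (LinearMap.toSpanSingleton ℂ V x)
      comm := by
        intro g
        ext (c : ℂ)
        show (LinearMap.toSpanSingleton ℂ V x) ((W.ρ g) (1 : ℂ)) = V.ρ g ((1 : ℂ) • x)
        have : (W.ρ g) (1 : ℂ) = 1 := rfl
        rw [this, map_smul, hinv g]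
        rfl }
  have hfne : f ≠ 0 := by
    intro h
    have hx : x = (0 : V) := by
      have h1 := congrArg (fun p => p.hom (1 : ℂ)) h
      have : (LinearMap.toSpanSingleton ℂ V x) (1 : ℂ) = (0 : W.V ⟶ V.V) (1 : ℂ) := h1
      simpa [LinearMap.toSpanSingleton_apply] using this.trans (rfl : _ = (0 : V.V))
    exact hx0 hx
  haveI : Mono f := by
    apply ConcreteCategory.mono_of_injective
    intro a b hab
    have : (a : ℂ) • x = (b : ℂ) • x := hab
    exact smul_left_injective ℂ hx0 this
  haveI := isIso_of_mono_of_nonzero (Y := V) hfne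
  have hiso : W ≅ V := asIso f
  have hc := FDRep.char_iso hiso
  intro g
  rw [← hc]
  show LinearMap.trace ℂ ℂ (W.ρ g) = 1
  have : W.ρ g = LinearMap.id := rfl
  rw [this]
  simp [LinearMap.trace_id]

open Module in
lemma char_sum_eq_zero (G : Type) [Group G] [Fintype G] (V : FDRep ℂ G)
    [CategoryTheory.Simple V] (hV : ¬ ∀ g : G, V.character g = 1) :
    ∑ g : G, V.character g = 0 := by
  by_contra hs
  haveI : Invertible ((Fintype.card G : ℂ)) :=
    invertibleOfNonzero (Nat.cast_ne_zero.mpr Fintype.card_ne_zero)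
  have hm := FDRep.average_char_eq_finrank_invariants V
  have hfr : 0 < finrank ℂ (Representation.invariants V.ρ) := by
    rcases Nat.eq_zero_or_pos (finrank ℂ (Representation.invariants V.ρ)) with h | h
    · rw [h] at hm
      simp only [Nat.cast_zero, smul_eq_mul] at hm
      exact absurd (by
        rcases mul_eq_zero.mp hm with h' | h'
        · exact absurd h' (Invertible.ne_zero _)
        · exact h') hs
    · exact h
  obtain ⟨x, hx⟩ := Module.finrank_pos_iff_exists_ne_zero.mp hfr
  have hx0 : (x : V) ≠ 0 := fun h => hx (Subtype.ext h)
  have hinv : ∀ g : G, V.ρ g (x : V) = (x : V) :=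
    (Representation.mem_invariants V.ρ (x : V)).mp x.2
  exact hV (char_eq_one_of_invariant G V (x : V) hx0 hinv)

end Aux

open CategoryTheory

/-- Let `t ≥ 2` and let `H = G × (G ≀ Sₙ)` be the subgroup of
`G ≀ S_{n+1}` of elements whose permutation part fixes the distinguished point
(here the point `0`, with the `G`-factor recording the entry there).  Then the
restriction of `a_{t,c}` to `H` does not depend on the `G`-factor and equals
`a_{t,c}` of the restricted element; consequently
`⟨Ind φ, a_{t,c}⟩_{G ≀ S_{n+1}} = ⟨φ, 1⟩_G · ⟨a_{t,c}, 1⟩_{G ≀ Sₙ}`,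
and if `φ` is nontrivial this inner product vanishes. -/
theorem stmt11 (G : Type) [Group G] [Fintype G] (n t : ℕ) (hn : 1 ≤ n)
    (ht : 2 ≤ t) (htn : t ≤ n) (c : ConjClasses G)
    (V : FDRep ℂ G) [Simple V] :
    (∀ (g : G) (v' : Fin n → G) (σ' : Equiv.Perm (Fin n)),
        aTC t c (Fin.cons g v') (Equiv.Perm.decomposeFin.symm (0, σ'))
          = aTC t c v' σ') ∧
    ((Fintype.card ((Fin (n + 1) → G) × Equiv.Perm (Fin (n + 1))) : ℂ)⁻¹ *
        ∑ v : Fin (n + 1) → G, ∑ σ : Equiv.Perm (Fin (n + 1)),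
          (∑ i : Fin (n + 1), if σ i = i then V.character (v i) else 0) *
            (starRingEnd ℂ) ((aTC t c v σ : ℕ) : ℂ)
      = ((Fintype.card G : ℂ)⁻¹ * ∑ g : G, V.character g * (starRingEnd ℂ) 1) *
        ((Fintype.card ((Fin n → G) × Equiv.Perm (Fin n)) : ℂ)⁻¹ *
          ∑ v' : Fin n → G, ∑ σ' : Equiv.Perm (Fin n),
            ((aTC t c v' σ' : ℕ) : ℂ) * (starRingEnd ℂ) 1)) ∧
    ((¬ ∀ g : G, V.character g = 1) →
      (Fintype.card ((Fin (n + 1) → G) × Equiv.Perm (Fin (n + 1))) : ℂ)⁻¹ *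
        ∑ v : Fin (n + 1) → G, ∑ σ : Equiv.Perm (Fin (n + 1)),
          (∑ i : Fin (n + 1), if σ i = i then V.character (v i) else 0) *
            (starRingEnd ℂ) ((aTC t c v σ : ℕ) : ℂ) = 0) := by
  have part1 : ∀ (g : G) (v' : Fin n → G) (σ' : Equiv.Perm (Fin n)),
      aTC t c (Fin.cons g v') (Equiv.Perm.decomposeFin.symm (0, σ')) = aTC t c v' σ' :=
    fun g v' σ' => aTC_cons t ht c g v' σ'
  have part2 : (Fintype.card ((Fin (n + 1) → G) × Equiv.Perm (Fin (n + 1))) : ℂ)⁻¹ *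
        ∑ v : Fin (n + 1) → G, ∑ σ : Equiv.Perm (Fin (n + 1)),
          (∑ i : Fin (n + 1), if σ i = i then V.character (v i) else 0) *
            (starRingEnd ℂ) ((aTC t c v σ : ℕ) : ℂ)
      = ((Fintype.card G : ℂ)⁻¹ * ∑ g : G, V.character g * (starRingEnd ℂ) 1) *
        ((Fintype.card ((Fin n → G) × Equiv.Perm (Fin n)) : ℂ)⁻¹ *
          ∑ v' : Fin n → G, ∑ σ' : Equiv.Perm (Fin n),
            ((aTC t c v' σ' : ℕ) : ℂ) * (starRingEnd ℂ) 1) := by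
    simp only [map_natCast, map_one, mul_one]
    rw [sum_main n t ht c V.character]
    rw [Fintype.card_prod, Fintype.card_prod, Fintype.card_fun, Fintype.card_fun,
      Fintype.card_perm, Fintype.card_perm, Fintype.card_fin, Fintype.card_fin,
      Nat.factorial_succ]
    have hG : (Fintype.card G : ℂ) ≠ 0 := Nat.cast_ne_zero.mpr Fintype.card_ne_zero
    have hfac : ((Nat.factorial n : ℕ) : ℂ) ≠ 0 :=
      Nat.cast_ne_zero.mpr (Nat.factorial_ne_zero n)
    have hn1 : ((n + 1 : ℕ) : ℂ) ≠ 0 := Nat.cast_ne_zero.mpr (Nat.succ_ne_zero n)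
    push_cast
    push_cast at hn1
    field_simp
    ring
  refine ⟨part1, part2, fun hV => ?_⟩
  rw [part2]
  have hz : ∑ g : G, V.character g = 0 := char_sum_eq_zero G V hV
  simp only [map_one, mul_one, hz, mul_zero, zero_mul]
end
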